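/- arXiv:2503.23561 — 3 statements merged into one kernel-verified Lean document; each statement's English description precedes it below -/
import Mathlib

section
/- Let R₁,…,R_m,R be i.i.d. real random variables with atomless common distribution, fix δ ∈ (0,1), and let p = ⌈(1-δ)(m+1)⌉, assuming p ≤ m. Let R_(p) denote the p-th smallest value among R₁,…,R_m. Then P(R > R_(p)) = ⌊δ(m+1)⌋/(m+1) ≤ δ. -/
/-!
Almost surely the `m + 1` samples are pairwise distinct, and the law of the sample is invariant
under permuting coordinates, so the rank of `R` among all `m + 1` samples is uniform on
`{0, …, m}`. The event `R_(p) < R` says that at least `p` of the `Rᵢ` lie below `R`; it therefore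
has probability `(m + 1 - p) / (m + 1)`, and `m + 1 - p = ⌊δ (m + 1)⌋` because
`p = ⌈(1 - δ)(m + 1)⌉`.
-/

open MeasureTheory Finset ENNReal

/-- The `k`-th smallest value (0-based) among `f 0, …, f (m-1)`. -/
noncomputable def orderStat {m : ℕ} (f : Fin m → ℝ) (k : Fin m) : ℝ :=
  ((Multiset.map f Finset.univ.val).sort (· ≤ ·)).get ⟨k, by simp⟩

open ProbabilityTheory

theorem List.Pairwise.get_lt_iff_lt_countP {α : Type*} [LinearOrder α] :
    ∀ {l : List α}, l.Pairwise (· ≤ ·) → ∀ (i : Fin l.length) (r : α),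
      l.get i < r ↔ (i : ℕ) < l.countP (· < r)
  | [], _, i, _ => i.elim0
  | a :: t, hl, i, r => by
    obtain ⟨ha, ht⟩ := List.pairwise_cons.mp hl
    by_cases har : a < r
    · rw [List.countP_cons_of_pos (by simpa using har)]
      match i with
      | ⟨0, _⟩ => simpa using har
      | ⟨j + 1, hj⟩ => simpa using ht.get_lt_iff_lt_countP ⟨j, by simpa using hj⟩ r
    · have hge : ∀ x ∈ a :: t, ¬ x < r := fun x hx hxr =>
        har ((List.forall_mem_cons.mpr ⟨le_rfl, ha⟩ x hx).trans_lt hxr)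
      rw [List.countP_eq_zero.mpr (by simpa using hge)]
      simpa using hge _ (List.get_mem _ i)

theorem orderStat_lt_iff {m : ℕ} (f : Fin m → ℝ) (k : Fin m) (r : ℝ) :
    orderStat f k < r ↔ (k : ℕ) < #{i | f i < r} := by
  rw [orderStat, (Multiset.pairwise_sort _ _).get_lt_iff_lt_countP, ← Multiset.coe_countP,
    Multiset.sort_eq, Multiset.countP_map]
  rfl

theorem Int.floor_natCast_sub {R : Type*} [Ring R] [LinearOrder R] [IsStrictOrderedRing R]
    [FloorRing R] (n : ℕ) {x : R} (hx : 0 ≤ x) : ⌊(n : R) - x⌋ = n - ⌈x⌉₊ := by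
  rw [sub_eq_neg_add, Int.floor_add_natCast, Int.floor_neg, Int.natCast_ceil_eq_ceil hx]
  ring

section Rank

variable {ι α : Type*} [Fintype ι] [LinearOrder α]

def rankCount (ω : ι → α) (j : ι) : ℕ := #{i | ω i < ω j}

theorem rankCount_lt_card (ω : ι → α) (j : ι) : rankCount ω j < Fintype.card ι :=
  card_lt_univ_of_notMem (x := j) (by simp)

theorem rankCount_lt_rankCount {ω : ι → α} {j j' : ι} (h : ω j < ω j') :
    rankCount ω j < rankCount ω j' := by
  refine card_lt_card <| (ssubset_iff_of_subset fun i hi => ?_).mpr ⟨j, by simp [h]⟩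
  simp only [mem_filter] at hi ⊢
  exact ⟨hi.1, hi.2.trans h⟩

theorem rankCount_injective {ω : ι → α} (hω : Function.Injective ω) :
    Function.Injective (rankCount ω) := by
  intro j j' h
  rcases lt_trichotomy (ω j) (ω j') with hlt | heq | hgt
  · exact absurd h (rankCount_lt_rankCount hlt).ne
  · exact hω heq
  · exact absurd h (rankCount_lt_rankCount hgt).ne'

theorem exists_rankCount_eq {ω : ι → α} (hω : Function.Injective ω) {k : ℕ}
    (hk : k < Fintype.card ι) : ∃ j, rankCount ω j = k := by
  let r : ι → Fin (Fintype.card ι) := fun j => ⟨rankCount ω j, rankCount_lt_card ω j⟩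
  have hr : Function.Bijective r := (Fintype.bijective_iff_injective_and_card r).mpr
    ⟨fun j j' h => rankCount_injective hω (Fin.val_eq_of_eq h), by simp⟩
  obtain ⟨j, hj⟩ := hr.surjective ⟨k, hk⟩
  exact ⟨j, congrArg Fin.val hj⟩

theorem rankCount_comp_equiv (ω : ι → α) (σ : ι ≃ ι) (j : ι) :
    rankCount (ω ∘ σ) j = rankCount ω (σ j) :=
  card_equiv σ (by simp)

theorem card_filter_castSucc_lt_last {m : ℕ} (ω : Fin (m + 1) → α) :
    #{i : Fin m | ω i.castSucc < ω (Fin.last m)} = rankCount ω (Fin.last m) := by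
  simp only [rankCount, card_filter, Fin.sum_univ_castSucc, lt_irrefl, if_false, add_zero]

theorem measurable_rankCount [TopologicalSpace α] [MeasurableSpace α] [OpensMeasurableSpace α]
    [SecondCountableTopology α] [OrderClosedTopology α] (j : ι) :
    Measurable fun ω : ι → α => rankCount ω j := by
  simp only [rankCount, card_filter]
  exact Finset.measurable_sum _ fun i _ => Measurable.ite
    (measurableSet_lt (measurable_pi_apply i) (measurable_pi_apply j))
    measurable_const measurable_const

end Rank

theorem MeasureTheory.Measure.prod_diagonal_eq_zero {α : Type*} [MeasurableSpace α]
    [MeasurableEq α] (μ ν : Measure α) [SFinite ν] [NullSingletonClass ν] :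
    μ.prod ν (Set.diagonal α) = 0 := by
  rw [Measure.prod_apply measurableSet_diagonal]
  simp [Set.preimage, Set.diagonal]

section IID

variable {ι α : Type*} [Fintype ι] [MeasurableSpace α] (μ : Measure α) [IsProbabilityMeasure μ]

theorem measure_pi_eval_eq_eval_eq_zero [MeasurableEq α] [NullSingletonClass μ] {i j : ι}
    (hij : i ≠ j) : Measure.pi (fun _ : ι => μ) {ω | ω i = ω j} = 0 := by
  have hind : IndepFun (fun ω : ι → α => ω i) (fun ω => ω j) (Measure.pi fun _ => μ) :=
    (iIndepFun_pi (X := fun _ => id) fun _ => aemeasurable_id).indepFun hij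
  change Measure.pi _ ((fun ω : ι → α => (ω i, ω j)) ⁻¹' Set.diagonal α) = 0
  rw [← Measure.map_apply (by fun_prop) measurableSet_diagonal,
    (indepFun_iff_map_prod_eq_prod_map_map (measurable_pi_apply i).aemeasurable
      (measurable_pi_apply j).aemeasurable).mp hind,
    (measurePreserving_eval _ i).map_eq, (measurePreserving_eval _ j).map_eq]
  exact Measure.prod_diagonal_eq_zero μ μ

theorem ae_injective_pi [MeasurableEq α] [NullSingletonClass μ] :
    ∀ᵐ ω ∂Measure.pi (fun _ : ι => μ), Function.Injective ω := by
  have : ∀ᵐ ω ∂Measure.pi (fun _ : ι => μ), ∀ i j, i ≠ j → ω i ≠ ω j := by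
    simp only [ae_all_iff]
    intro i j hij
    exact ae_iff.mpr (by simpa using measure_pi_eval_eq_eval_eq_zero μ hij)
  filter_upwards [this] with ω hω i j
  exact not_imp_not.mp (hω i j)

theorem measurePreserving_comp_equiv (σ : ι ≃ ι) :
    MeasurePreserving (fun ω : ι → α => ω ∘ σ) (Measure.pi fun _ => μ)
      (Measure.pi fun _ => μ) := by
  convert measurePreserving_arrowCongr' (fun _ => μ) (fun _ => μ) σ.symm (MeasurableEquiv.refl α)
    (fun _ => MeasurePreserving.id μ)
  ext ω
  simp [MeasurableEquiv.arrowCongr', Equiv.arrowCongr']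

variable [LinearOrder α] [TopologicalSpace α] [OpensMeasurableSpace α]
    [SecondCountableTopology α] [OrderClosedTopology α] [MeasurableEq α] [NullSingletonClass μ]

theorem measure_pi_rankCount_eq {k : ℕ} (hk : k < Fintype.card ι) (j : ι) :
    Measure.pi (fun _ : ι => μ) {ω | rankCount ω j = k} = (Fintype.card ι : ℝ≥0∞)⁻¹ := by
  classical
  set ν := Measure.pi fun _ : ι => μ
  set A : ι → Set (ι → α) := fun j => {ω | rankCount ω j = k}
  have hA : ∀ j, MeasurableSet (A j) := fun j => measurable_rankCount j (measurableSet_singleton k)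
  have hnoninj : ν {ω | ¬ Function.Injective ω} = 0 := ae_iff.mp (ae_injective_pi μ)
  -- exchangeability makes all `A j'` equally likely, and a.s. exactly one of them occurs
  have hexch : ∀ j', ν (A j') = ν (A j) := fun j' => by
    rw [← (measurePreserving_comp_equiv μ (Equiv.swap j j')).measure_preimage
      (hA j).nullMeasurableSet]
    congr 1
    ext ω
    simp [A, rankCount_comp_equiv]
  have hdisj : Pairwise (Function.onFun (AEDisjoint ν) A) := fun j j' hjj' =>
    measure_mono_null (fun ω hω hinj => hjj' (rankCount_injective hinj (hω.1.trans hω.2.symm)))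
      hnoninj
  have hcover : ν (⋃ j', A j') = 1 := by
    rw [← prob_compl_eq_zero_iff (MeasurableSet.iUnion hA)]
    refine measure_mono_null ?_ hnoninj
    intro ω hω hinj
    exact hω (Set.mem_iUnion.mpr (exists_rankCount_eq hinj hk))
  rw [measure_iUnion₀ hdisj fun j' => (hA j').nullMeasurableSet, tsum_fintype] at hcover
  simp only [hexch, sum_const, card_univ, nsmul_eq_mul] at hcover
  exact ENNReal.eq_inv_of_mul_eq_one_left (by rwa [mul_comm])

theorem measure_pi_le_rankCount (k : ℕ) (j : ι) :
    Measure.pi (fun _ : ι => μ) {ω | k ≤ rankCount ω j}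
      = ((Fintype.card ι - k : ℕ) : ℝ≥0∞) / Fintype.card ι := by
  have hsplit : {ω : ι → α | k ≤ rankCount ω j}
      = ⋃ l ∈ Ico k (Fintype.card ι), {ω | rankCount ω j = l} := by
    ext ω
    simp [rankCount_lt_card ω j]
  have hdisj : Set.PairwiseDisjoint ↑(Ico k (Fintype.card ι))
      fun l => {ω : ι → α | rankCount ω j = l} :=
    fun l _ l' _ hll' => Set.disjoint_left.mpr fun ω h h' => hll' (h.symm.trans h')
  rw [hsplit, measure_biUnion_finset hdisj fun l _ =>
      measurable_rankCount j (measurableSet_singleton l),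
    sum_congr rfl fun l hl => measure_pi_rankCount_eq μ (mem_Ico.mp hl).2 j, sum_const,
    Nat.card_Ico, nsmul_eq_mul, div_eq_mul_inv]

end IID

/-- Let `R₁,…,R_m,R` be i.i.d. with atomless distribution, `δ ∈ (0,1)`,
`p = ⌈(1-δ)(m+1)⌉ ≤ m`.  Then `P(R > R_(p)) = ⌊δ(m+1)⌋/(m+1) ≤ δ`,
where `R_(p)` is the `p`-th smallest of the first `m` samples. -/
theorem stmt_6 (m : ℕ) (hm : 1 ≤ m) (μ : Measure ℝ) [IsProbabilityMeasure μ] [NullSingletonClass μ]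
    (δ : ℝ) (hδ : δ ∈ Set.Ioo (0:ℝ) 1)
    (p : ℕ) (hp : p = ⌈(1 - δ) * ((m : ℝ) + 1)⌉₊) (hpm : p ≤ m) :
    Measure.pi (fun _ : Fin (m + 1) => μ)
        {ω | orderStat (fun i : Fin m => ω i.castSucc) ⟨p - 1, by omega⟩ < ω (Fin.last m)}
      = ENNReal.ofReal ((⌊δ * ((m : ℝ) + 1)⌋ : ℝ) / ((m : ℝ) + 1)) ∧
    ENNReal.ofReal ((⌊δ * ((m : ℝ) + 1)⌋ : ℝ) / ((m : ℝ) + 1)) ≤ ENNReal.ofReal δ := by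
  obtain ⟨hδ0, hδ1⟩ := hδ
  have hm1 : (0 : ℝ) < m + 1 := by positivity
  have hq : 0 < (1 - δ) * ((m : ℝ) + 1) := mul_pos (by linarith) hm1
  have hp1 : 0 < p := hp ▸ Nat.ceil_pos.mpr hq
  have hevent : {ω : Fin (m + 1) → ℝ |
      orderStat (fun i : Fin m => ω i.castSucc) ⟨p - 1, by omega⟩ < ω (Fin.last m)}
      = {ω | p ≤ rankCount ω (Fin.last m)} := by
    ext ω
    simp only [Set.mem_ofPred_eq, orderStat_lt_iff, card_filter_castSucc_lt_last]
    omega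
  have hfloor : (⌊δ * ((m : ℝ) + 1)⌋ : ℝ) = ((m + 1 - p : ℕ) : ℝ) := by
    have : δ * ((m : ℝ) + 1) = ((m + 1 : ℕ) : ℝ) - (1 - δ) * (m + 1) := by push_cast; ring
    rw [this, Int.floor_natCast_sub _ hq.le, ← hp]
    push_cast [Nat.cast_sub (by omega : p ≤ m + 1)]
    ring
  refine ⟨?_, ENNReal.ofReal_le_ofReal ((div_le_iff₀ hm1).mpr (Int.floor_le _))⟩
  rw [hevent, measure_pi_le_rankCount, hfloor, ENNReal.ofReal_div_of_pos hm1, Fintype.card_fin,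
    ENNReal.ofReal_natCast, ← Nat.cast_add_one, ENNReal.ofReal_natCast]
end

section
/- Let R₁,…,R_m,R be i.i.d. real random variables with atomless common distribution, fix δ ∈ (0,1), and let p = ⌈(1-δ)(m+1)⌉ with p ≤ m. Then the probability (over all m+1 samples jointly) that |{i ∈ {1,…,m} : R_i ≥ R}| + 1 ≤ ⌊δ(m+1)⌋ is at most δ; i.e., the vanilla conformal set predictor Γ_δ = {ω : |{i : R_i ≥ R(ω)}|+1 > δ(m+1)} is conservatively valid at level δ. -/
open MeasureTheory Finset ENNReal

/-!
Let `r_j(ω) = #{j' | ω j ≤ ω j'}` be the rank of the `j`-th score counted from the top, ties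
included. Deterministically at most `k` indices satisfy `r_j ≤ k`, since the smallest score among
them is dominated by all of them. The product measure is invariant under permutations of the
coordinates, so the `n` events `{r_j ≤ k}` are equally likely and
`n • P(r_j ≤ k) = E #{j | r_j ≤ k} ≤ k`. The event of the theorem is
`{r_{m+1} ≤ ⌊δ(m+1)⌋}`, so its probability is at most `⌊δ(m+1)⌋ / (m+1) ≤ δ`.
-/

section Rank

variable {ι α : Type*} [Fintype ι] [LinearOrder α]

def upperRank (ω : ι → α) (j : ι) : ℕ := #{j' | ω j ≤ ω j'}

theorem card_filter_upperRank_le_le (ω : ι → α) (k : ℕ) : #{j | upperRank ω j ≤ k} ≤ k := by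
  set S : Finset ι := {j | upperRank ω j ≤ k}
  rcases S.eq_empty_or_nonempty with hS | hS
  · simp [hS]
  obtain ⟨j₀, hj₀S, hj₀min⟩ := S.exists_min_image ω hS
  calc #S ≤ upperRank ω j₀ := card_le_card fun j hj => mem_filter.2 ⟨mem_univ _, hj₀min j hj⟩
    _ ≤ k := (mem_filter.1 hj₀S).2

theorem upperRank_comp_perm (ω : ι → α) (σ : Equiv.Perm ι) (j : ι) :
    upperRank (ω ∘ σ) j = upperRank ω (σ j) :=
  card_equiv σ (by simp)

theorem upperRank_last {m : ℕ} (ω : Fin (m + 1) → α) :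
    upperRank ω (Fin.last m) = #{i : Fin m | ω (Fin.last m) ≤ ω i.castSucc} + 1 := by
  rw [upperRank, Fin.univ_castSuccEmb, filter_cons, if_pos le_rfl, card_cons, filter_map,
    card_map]
  rfl

end Rank

section Exchangeability

variable {ι α : Type*} [Fintype ι] [MeasurableSpace α]

theorem measurePreserving_comp_perm (μ : Measure α) [SigmaFinite μ] (σ : Equiv.Perm ι) :
    MeasurePreserving (fun ω : ι → α => ω ∘ σ) (Measure.pi fun _ => μ)
      (Measure.pi fun _ => μ) :=
  measurePreserving_arrowCongr' (fun _ => μ) (fun _ => μ) σ.symm (MeasurableEquiv.refl α)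
    fun _ => MeasurePreserving.id μ

variable [LinearOrder α] [TopologicalSpace α] [OrderClosedTopology α] [OpensMeasurableSpace α]
  [SecondCountableTopology α]

theorem measurableSet_upperRank_le (j : ι) (k : ℕ) :
    MeasurableSet {ω : ι → α | upperRank ω j ≤ k} := by
  have : Measurable fun ω : ι → α => upperRank ω j := by
    simp only [upperRank, card_filter]
    exact Finset.measurable_sum _ fun j' _ =>
      Measurable.ite (measurableSet_le (measurable_pi_apply j) (measurable_pi_apply j'))
        measurable_const measurable_const
  exact this measurableSet_Iic

theorem pi_upperRank_le_eq (μ : Measure α) [SigmaFinite μ] (i j : ι) (k : ℕ) :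
    Measure.pi (fun _ => μ) {ω : ι → α | upperRank ω i ≤ k}
      = Measure.pi (fun _ => μ) {ω : ι → α | upperRank ω j ≤ k} := by
  classical
  have hpre : (fun ω : ι → α => ω ∘ Equiv.swap i j) ⁻¹' {ω | upperRank ω j ≤ k}
      = {ω | upperRank ω i ≤ k} := by
    ext ω
    simp [upperRank_comp_perm]
  rw [← hpre, (measurePreserving_comp_perm μ _).measure_preimage
    (measurableSet_upperRank_le j k).nullMeasurableSet]

theorem card_mul_pi_upperRank_le_le (μ : Measure α) [IsProbabilityMeasure μ] (j : ι) (k : ℕ) :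
    Fintype.card ι * Measure.pi (fun _ => μ) {ω : ι → α | upperRank ω j ≤ k} ≤ k := by
  set ν := Measure.pi fun _ : ι => μ
  calc (Fintype.card ι : ℝ≥0∞) * ν {ω | upperRank ω j ≤ k}
      = ∑ i, ν {ω | upperRank ω i ≤ k} := by
        simp [pi_upperRank_le_eq μ _ j, ν]
    _ = ∫⁻ ω, ∑ i, {ω | upperRank ω i ≤ k}.indicator 1 ω ∂ν := by
        rw [lintegral_finsetSum _ fun i _ =>
          measurable_one.indicator (measurableSet_upperRank_le i k)]
        simp_rw [lintegral_indicator_one (measurableSet_upperRank_le _ k)]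
    _ = ∫⁻ ω, (#{i | upperRank ω i ≤ k} : ℝ≥0∞) ∂ν := by
        simp [Set.indicator_apply, sum_boole]
    _ ≤ ∫⁻ _, (k : ℝ≥0∞) ∂ν :=
        lintegral_mono fun ω => Nat.cast_le.2 (card_filter_upperRank_le_le ω k)
    _ = k := by simp [ν]

end Exchangeability

theorem natCast_floor_le_ofReal (x : ℝ) : (⌊x⌋₊ : ℝ≥0∞) ≤ ENNReal.ofReal x := by
  rw [← ENNReal.ofReal_natCast]
  rcases le_total 0 x with h | h
  · exact ENNReal.ofReal_le_ofReal (Nat.floor_le h)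
  · simp [Nat.floor_of_nonpos h]

theorem stmt_7_general (m : ℕ) (μ : Measure ℝ) [IsProbabilityMeasure μ]
    (δ : ℝ) :
    Measure.pi (fun _ : Fin (m + 1) => μ)
        {ω | ((Finset.univ.filter
              (fun i : Fin m => ω (Fin.last m) ≤ ω i.castSucc)).card + 1 : ℤ)
            ≤ ⌊δ * ((m : ℝ) + 1)⌋}
      ≤ ENNReal.ofReal δ := by
  set k := ⌊δ * ((m : ℝ) + 1)⌋₊
  have hsub : {ω : Fin (m + 1) → ℝ | ((Finset.univ.filter
        (fun i : Fin m => ω (Fin.last m) ≤ ω i.castSucc)).card + 1 : ℤ) ≤ ⌊δ * ((m : ℝ) + 1)⌋}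
      ⊆ {ω | upperRank ω (Fin.last m) ≤ k} := by
    intro ω hω
    simp only [Set.mem_ofPred_eq, upperRank_last, k, ← Int.floor_toNat] at hω ⊢
    omega
  have hk : (k : ℝ≥0∞) ≤ ENNReal.ofReal δ * ((m : ℝ≥0∞) + 1) :=
    (natCast_floor_le_ofReal _).trans_eq (by rw [ENNReal.ofReal_mul' (by positivity)]; norm_cast)
  calc _ ≤ Measure.pi (fun _ => μ) {ω : Fin (m + 1) → ℝ | upperRank ω (Fin.last m) ≤ k} :=
        measure_mono hsub
    _ ≤ k / ((m : ℝ≥0∞) + 1) := by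
        rw [ENNReal.le_div_iff_mul_le (by simp) (by simp), mul_comm]
        simpa using card_mul_pi_upperRank_le_le μ (Fin.last m) k
    _ ≤ ENNReal.ofReal δ := ENNReal.div_le_of_le_mul hk

/-- Vanilla conformal prediction validity: for i.i.d. atomless nonconformity scores
`R₁,…,R_m` and a fresh score `R = ω (Fin.last m)`, and `δ ∈ (0,1)`, the probability
that `|{i : R_i ≥ R}| + 1 ≤ ⌊δ(m+1)⌋` is at most `δ`; i.e., the vanilla conformal set
predictor is conservatively valid at level `δ`. -/
theorem stmt_7 (m : ℕ) (hm : 1 ≤ m) (μ : Measure ℝ) [IsProbabilityMeasure μ] [NullSingletonClass μ]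
    (δ : ℝ) (hδ : δ ∈ Set.Ioo (0:ℝ) 1) :
    Measure.pi (fun _ : Fin (m + 1) => μ)
        {ω | ((Finset.univ.filter
              (fun i : Fin m => ω (Fin.last m) ≤ ω i.castSucc)).card + 1 : ℤ)
            ≤ ⌊δ * ((m : ℝ) + 1)⌋}
      ≤ ENNReal.ofReal δ :=
  stmt_7_general m μ δ
end

section
/- For ε, δ ∈ (0,1) and integer r ≥ 0, if m ≥ (2/ε)(r + ln(1/δ)) then the binomial tail satisfies ∑_{i=0}^{r} C(m,i) ε^i (1-ε)^{m-i} ≤ δ. -/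
/-- Sample-size bound (Remark 2): for `ε, δ ∈ (0,1)` and `r ≥ 0`, if
`m ≥ (2/ε)(r + ln(1/δ))` then `∑_{i=0}^{r} C(m,i) ε^i (1-ε)^{m-i} ≤ δ`. -/
theorem stmt_12 (ε δ : ℝ) (hε : ε ∈ Set.Ioo (0:ℝ) 1) (hδ : δ ∈ Set.Ioo (0:ℝ) 1)
    (r m : ℕ) (hm : (2 / ε) * ((r : ℝ) + Real.log (1 / δ)) ≤ (m : ℝ)) :
    ∑ i ∈ Finset.range (r + 1), (m.choose i : ℝ) * ε ^ i * (1 - ε) ^ (m - i) ≤ δ := by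
  obtain ⟨hε0, hε1⟩ := hε
  obtain ⟨hδ0, hδ1⟩ := hδ
  have h1ε : (0:ℝ) ≤ 1 - ε := by linarith
  have hhalf : (0:ℝ) ≤ 1 - ε/2 := by linarith
  have hq0 : (0:ℝ) ≤ ε/2 := by linarith
  -- Step 1: pointwise bound by 2^r times tilted terms
  have key : ∑ i ∈ Finset.range (r + 1), (m.choose i : ℝ) * ε ^ i * (1 - ε) ^ (m - i)
      ≤ 2^r * ∑ i ∈ Finset.range (r + 1),
        (m.choose i : ℝ) * (ε/2) ^ i * (1 - ε) ^ (m - i) := by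
    rw [Finset.mul_sum]
    apply Finset.sum_le_sum
    intro i hi
    have hi' : i ≤ r := Nat.lt_succ_iff.mp (Finset.mem_range.mp hi)
    have h2 : (2:ℝ)^i ≤ 2^r := pow_le_pow_right₀ one_le_two hi'
    have hnn : (0:ℝ) ≤ (m.choose i : ℝ) * (ε/2)^i * (1-ε)^(m-i) := by positivity
    have heps : ε ^ i = 2^i * (ε/2)^i := by
      rw [← mul_pow]; ring_nf
    calc (m.choose i : ℝ) * ε ^ i * (1 - ε) ^ (m - i)
        = 2^i * ((m.choose i : ℝ) * (ε/2)^i * (1-ε)^(m-i)) := by rw [heps]; ring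
      _ ≤ 2^r * ((m.choose i : ℝ) * (ε/2)^i * (1-ε)^(m-i)) :=
          mul_le_mul_of_nonneg_right h2 hnn
  -- Step 2: the tilted sum is at most (1 - ε/2)^m
  have hS : ∑ i ∈ Finset.range (r + 1), (m.choose i : ℝ) * (ε/2) ^ i * (1 - ε) ^ (m - i)
      ≤ (1 - ε/2)^m := by
    have hext : ∑ i ∈ Finset.range (r + 1), (m.choose i : ℝ) * (ε/2) ^ i * (1 - ε) ^ (m - i)
        ≤ ∑ i ∈ Finset.range (m + r + 1), (m.choose i : ℝ) * (ε/2) ^ i * (1 - ε) ^ (m - i) :=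
      Finset.sum_le_sum_of_subset_of_nonneg (Finset.range_subset_range.mpr (by omega))
        (fun i _ _ => by positivity)
    have heq : ∑ i ∈ Finset.range (m + r + 1), (m.choose i : ℝ) * (ε/2) ^ i * (1 - ε) ^ (m - i)
        = ∑ i ∈ Finset.range (m + 1), (m.choose i : ℝ) * (ε/2) ^ i * (1 - ε) ^ (m - i) := by
      refine (Finset.sum_subset (Finset.range_subset_range.mpr (by omega)) ?_).symm
      intro i hi hni
      have hmi : m < i := by
        simp only [Finset.mem_range] at hni
        omega
      rw [Nat.choose_eq_zero_of_lt hmi]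
      simp
    have hbin : ∑ i ∈ Finset.range (m + 1), (m.choose i : ℝ) * (ε/2) ^ i * (1 - ε) ^ (m - i)
        = (1 - ε/2)^m := by
      have h := add_pow (ε/2) (1-ε) m
      have hsum : ε/2 + (1-ε) = 1 - ε/2 := by ring
      rw [hsum] at h
      rw [h]
      apply Finset.sum_congr rfl
      intro i _
      ring
    rw [heq, hbin] at hext
    exact hext
  -- Step 3: (1-ε/2)^m ≤ exp(-(ε/2)*m)
  have hexp : (1 - ε/2)^m ≤ Real.exp (-(ε/2 * m)) := by
    have h1 : 1 - ε/2 ≤ Real.exp (-(ε/2)) := by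
      have := Real.add_one_le_exp (-(ε/2))
      linarith
    calc (1 - ε/2)^m ≤ (Real.exp (-(ε/2)))^m := pow_le_pow_left₀ hhalf h1 m
      _ = Real.exp ((m:ℝ) * (-(ε/2))) := (Real.exp_nat_mul _ m).symm
      _ = Real.exp (-(ε/2 * m)) := by ring_nf
  -- Step 4: from hm, ε/2 * m ≥ r + log(1/δ)
  have hεm : (r:ℝ) + Real.log (1/δ) ≤ ε/2 * m := by
    have h := mul_le_mul_of_nonneg_left hm hq0
    have hne : ε ≠ 0 := ne_of_gt hε0
    have hid : ε/2 * (2/ε * ((r:ℝ) + Real.log (1/δ))) = (r:ℝ) + Real.log (1/δ) := by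
      field_simp
    linarith [hid ▸ h]
  have hexp2 : Real.exp (-(ε/2 * m)) ≤ Real.exp (-(r:ℝ)) * δ := by
    have : Real.exp (-(ε/2 * m)) ≤ Real.exp (-((r:ℝ) + Real.log (1/δ))) :=
      Real.exp_le_exp.mpr (by linarith)
    calc Real.exp (-(ε/2 * m)) ≤ Real.exp (-((r:ℝ) + Real.log (1/δ))) := this
      _ = Real.exp (-(r:ℝ)) * Real.exp (-Real.log (1/δ)) := by
          rw [← Real.exp_add]; ring_nf
      _ = Real.exp (-(r:ℝ)) * δ := by
          rw [one_div, Real.log_inv, neg_neg, Real.exp_log hδ0]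
  -- Step 5: 2^r * exp(-r) ≤ 1
  have h2e : (2:ℝ)^r * Real.exp (-(r:ℝ)) ≤ 1 := by
    have h2 : (2:ℝ) ≤ Real.exp 1 := by
      have := Real.exp_one_gt_d9
      linarith
    have : (2:ℝ)^r ≤ Real.exp ((r:ℝ)) := by
      calc (2:ℝ)^r ≤ (Real.exp 1)^r := pow_le_pow_left₀ (by norm_num) h2 r
        _ = Real.exp ((r:ℝ)) := by rw [← Real.exp_nat_mul]; ring_nf
    have hpos : (0:ℝ) < Real.exp ((r:ℝ)) := Real.exp_pos _
    rw [Real.exp_neg]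
    rw [mul_inv_le_iff₀ hpos, one_mul]
    exact this
  -- Combine
  have h2rnn : (0:ℝ) ≤ 2^r := by positivity
  calc ∑ i ∈ Finset.range (r + 1), (m.choose i : ℝ) * ε ^ i * (1 - ε) ^ (m - i)
      ≤ 2^r * ∑ i ∈ Finset.range (r + 1), (m.choose i : ℝ) * (ε/2) ^ i * (1 - ε) ^ (m - i) := key
    _ ≤ 2^r * (1 - ε/2)^m := mul_le_mul_of_nonneg_left hS h2rnn
    _ ≤ 2^r * Real.exp (-(ε/2 * m)) := mul_le_mul_of_nonneg_left hexp h2rnn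
    _ ≤ 2^r * (Real.exp (-(r:ℝ)) * δ) := mul_le_mul_of_nonneg_left hexp2 h2rnn
    _ = (2^r * Real.exp (-(r:ℝ))) * δ := by ring
    _ ≤ 1 * δ := mul_le_mul_of_nonneg_right h2e (le_of_lt hδ0)
    _ = δ := one_mul δ
end
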